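/- Let h be a symmetric bilinear form on an n-dimensional real inner product space (V,g). For all integers i ≥ 0 and r with i+1 ≤ r ≤ n−i, the extended (r,n−i)-cofactor of h vanishes: s_{(r,n−i)}(h) = 0. (For i = 0 and r = 1 this is the Cayley–Hamilton theorem for h.) -/

import Mathlib

noncomputable section

open Finset

/-- Double forms over an `n`-dimensional real inner product space, described by their
coefficients in a fixed orthonormal basis: a `(p,q)`-double form corresponds to a function
supported on pairs of subsets of cardinalities `p` and `q`. -/
abbrev DForm (n : ℕ) := Finset (Fin n) → Finset (Fin n) → ℝ

namespace DForm

variable {n : ℕ}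

/-- Sign of the shuffle placing the elements of `A` (in increasing order) before
those of `B` (in increasing order). -/
def shuffleSign (A B : Finset (Fin n)) : ℝ :=
  (-1 : ℝ) ^ (∑ x ∈ B, (A.filter fun a => x < a).card)

/-- The exterior product of double forms. -/
def wedge (ω₁ ω₂ : DForm n) : DForm n := fun I J =>
  ∑ A ∈ I.powerset, ∑ B ∈ J.powerset,
    shuffleSign A (I \ A) * shuffleSign B (J \ B) * ω₁ A B * ω₂ (I \ A) (J \ B)

/-- Exterior powers `ω^k` of a double form. -/
def dpow (ω : DForm n) : ℕ → DForm n
  | 0 => fun I J => if I = ∅ ∧ J = ∅ then 1 else 0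
  | k + 1 => wedge ω (dpow ω k)

/-- The double Hodge star operator. -/
def hstar (ω : DForm n) : DForm n := fun I J =>
  shuffleSign Iᶜ I * shuffleSign Jᶜ J * ω Iᶜ Jᶜ

/-- The contraction `c` of double forms. -/
def contr (ω : DForm n) : DForm n := fun I J =>
  ∑ j : Fin n,
    if j ∈ I ∨ j ∈ J then 0
    else shuffleSign {j} I * shuffleSign {j} J * ω (insert j I) (insert j J)

/-- Iterated contraction `c^k`. -/
def citer (ω : DForm n) : ℕ → DForm n
  | 0 => ω
  | k + 1 => contr (citer ω k)

/-- The inner product of double forms. -/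
def dinner (ω₁ ω₂ : DForm n) : ℝ :=
  ∑ I : Finset (Fin n), ∑ J : Finset (Fin n), ω₁ I J * ω₂ I J

/-- The transpose `ω^t` of a double form. -/
def transp (ω : DForm n) : DForm n := fun I J => ω J I

/-- The composition (Greub) product `ω₁ ∘ ω₂` of double forms. -/
def comp (ω₁ ω₂ : DForm n) : DForm n := fun I J =>
  ∑ K : Finset (Fin n), ω₂ I K * ω₁ K J

/-- The scalar value of a `(0,0)`-double form. -/
def toScalar (ω : DForm n) : ℝ := ω ∅ ∅

/-- The metric, as a `(1,1)`-double form. -/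
def gMetric (n : ℕ) : DForm n := fun I J => if I = J ∧ I.card = 1 then 1 else 0

/-- Iterated composition power `ω^{∘r}` of a `(1,1)`-double form, with `ω^{∘0} = g`. -/
def cpow (ω : DForm n) : ℕ → DForm n
  | 0 => gMetric n
  | r + 1 => comp ω (cpow ω r)

/-- The `(1,1)`-double form associated to a bilinear form, given by its matrix in the
orthonormal basis. -/
def ofMatrix (h : Matrix (Fin n) (Fin n) ℝ) : DForm n := fun I J =>
  ∑ i : Fin n, ∑ j : Fin n, if I = {i} ∧ J = {j} then h i j else 0

/-- `ω` is a `(p,q)`-double form. -/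
def IsOfDeg (ω : DForm n) (p q : ℕ) : Prop :=
  ∀ I J : Finset (Fin n), ω I J ≠ 0 → I.card = p ∧ J.card = q

/-- `ω` is a symmetric double form. -/
def IsSym (ω : DForm n) : Prop := ∀ I J, ω I J = ω J I

/-- The sign relating `e_{v 0} ∧ ⋯ ∧ e_{v (p-1)}` to the corresponding increasing
basis `p`-vector (and `0` if the indices are not pairwise distinct). -/
def tupleSign {p : ℕ} (v : Fin p → Fin n) : ℝ :=
  if Function.Injective v then (((Equiv.Perm.sign (Tuple.sort v)) : ℤ) : ℝ) else 0

/-- Evaluation of a double form on wedges of basis vectors indexed by arbitrary tuples. -/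
def evalT (ω : DForm n) {p q : ℕ} (v : Fin p → Fin n) (w : Fin q → Fin n) : ℝ :=
  tupleSign v * tupleSign w * ω (Finset.image v Finset.univ) (Finset.image w Finset.univ)

/-- The first Bianchi identity for a `(2,2)`-double form:
`R(x∧y,z∧t) + R(y∧z,x∧t) + R(z∧x,y∧t) = 0`. -/
def Bianchi2 (R : DForm n) : Prop :=
  ∀ x y z t : Fin n,
    evalT R ![x, y] ![z, t] + evalT R ![y, z] ![x, t] + evalT R ![z, x] ![y, t] = 0

/-- The first Bianchi identity for a `(p,p)`-double form. -/
def FirstBianchi (ω : DForm n) (p : ℕ) : Prop :=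
  ∀ (x : Fin (p + 1) → Fin n) (y : Fin (p - 1) → Fin n),
    ∑ j : Fin (p + 1),
      (-1 : ℝ) ^ (j : ℕ) * evalT ω (x ∘ Fin.succAbove j) (Fin.cons (x j) y) = 0

/-- The characteristic coefficient `s_k(h)` of a bilinear form `h`, defined through the
characteristic polynomial: `det(h - λ g) = ∑ (-1)^(n-i) s_i(h) λ^(n-i)`. -/
def sInv (h : Matrix (Fin n) (Fin n) ℝ) (k : ℕ) : ℝ :=
  (-1 : ℝ) ^ k * (Matrix.charpoly h).coeff (n - k)

/-- The `k`-th cofactor (Newton) transformation `t_k(h) = (1/(k!(n-1-k)!)) *(g^{n-1-k} h^k)`. -/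
def tInv (h : Matrix (Fin n) (Fin n) ℝ) (k : ℕ) : DForm n :=
  ((k.factorial * (n - 1 - k).factorial : ℕ) : ℝ)⁻¹ •
    hstar (wedge (dpow (gMetric n) (n - 1 - k)) (dpow (ofMatrix h) k))

/-- The `(r,q)`-cofactor `s_{(r,q)}(h) = (1/(q!(n-q-r)!)) *(g^{n-q-r} h^q)`. -/
def sCof (h : Matrix (Fin n) (Fin n) ℝ) (r q : ℕ) : DForm n :=
  ((q.factorial * (n - q - r).factorial : ℕ) : ℝ)⁻¹ •
    hstar (wedge (dpow (gMetric n) (n - q - r)) (dpow (ofMatrix h) q))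

end DForm
namespace DForm
/-- The extended `(r,q)`-cofactor of a bilinear form, defined by the expansion
`s_{(r,q)}(h) = ∑_{i=max(0,q-r)}^{q} ((-1)^{i+q}/(i! q! (i+r-q)!)) g^{i+r-q} c^i(h^q)`. -/
noncomputable def sCofExt {n : ℕ} (h : Matrix (Fin n) (Fin n) ℝ) (r q : ℕ) : DForm n :=
  ∑ i ∈ Finset.Icc (q - r) q,
    ((-1 : ℝ) ^ (i + q) /
        ((i.factorial : ℝ) * (q.factorial : ℝ) * ((i + r - q).factorial : ℝ))) •
      wedge (dpow (gMetric n) (i + r - q)) (citer (dpow (ofMatrix h) q) i)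
end DForm

/-!
Contraction and multiplication by `g` almost commute: for a `(p,q)`-form `α`,
`c (g^m α) = m (n - p - q - m + 1) g^(m-1) α + g^m (c α)`. Applied termwise to the expansion of
the extended cofactor, with `h^q` replaced by any `(q,q)`-form, the coefficients telescope to
`c s_{(r+1,q)} = (n - q - r) s_{(r,q)}`. For `r > n` the `(r,r)`-form `s_{(r,q)}` vanishes for
degree reasons, and descending in `r` the factor `n - q - r` stays nonzero as long as
`r + q > n`. Hence `s_{(r,q)} = 0` whenever `r + q > n`, which for `q = n - i` means `r ≥ i + 1`.
-/

namespace Finset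

lemma sum_powerset_powerset_sdiff {α M : Type*} [DecidableEq α] [AddCommMonoid M]
    (I : Finset α) (F : Finset α → Finset α → M) :
    ∑ C ∈ I.powerset, ∑ A ∈ C.powerset, F A (C \ A)
      = ∑ A ∈ I.powerset, ∑ A' ∈ (I \ A).powerset, F A A' := by
  rw [sum_sigma', sum_sigma']
  refine sum_nbij' (fun x => ⟨x.2, x.1 \ x.2⟩) (fun y => ⟨y.1 ∪ y.2, y.1⟩) ?_ ?_ ?_ ?_ ?_
  · rintro ⟨C, A⟩ hx
    simp only [mem_sigma, mem_powerset] at hx ⊢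
    exact ⟨hx.2.trans hx.1, sdiff_subset_sdiff hx.1 le_rfl⟩
  · rintro ⟨A, A'⟩ hy
    simp only [mem_sigma, mem_powerset] at hy ⊢
    exact ⟨union_subset hy.1 (hy.2.trans sdiff_subset), subset_union_left⟩
  · rintro ⟨C, A⟩ hx
    simp only [mem_sigma, mem_powerset] at hx
    simp [union_sdiff_of_subset hx.2]
  · rintro ⟨A, A'⟩ hy
    simp only [mem_sigma, mem_powerset] at hy
    simp [union_sdiff_cancel_left (disjoint_of_subset_right hy.2 disjoint_sdiff)]
  · intros; rfl

end Finset

namespace DForm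

variable {n : ℕ}

lemma shuffleSign_union_left {A B : Finset (Fin n)} (C : Finset (Fin n)) (h : Disjoint A B) :
    shuffleSign (A ∪ B) C = shuffleSign A C * shuffleSign B C := by
  simp only [shuffleSign, ← pow_add, ← sum_add_distrib, filter_union,
    card_union_of_disjoint (disjoint_filter_filter h)]

lemma shuffleSign_union_right {B C : Finset (Fin n)} (A : Finset (Fin n)) (h : Disjoint B C) :
    shuffleSign A (B ∪ C) = shuffleSign A B * shuffleSign A C := by
  rw [shuffleSign, shuffleSign, shuffleSign, sum_union h, pow_add]

lemma shuffleSign_mul_self (A B : Finset (Fin n)) : shuffleSign A B * shuffleSign A B = 1 := by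
  rw [shuffleSign, ← pow_add, ← two_mul, pow_mul]
  norm_num

lemma shuffleSign_singleton_mul_singleton {a j : Fin n} (hne : a ≠ j) :
    shuffleSign {j} {a} * shuffleSign {a} {j} = -1 := by
  rcases hne.lt_or_gt with hl | hl <;>
    simp [shuffleSign, filter_singleton, hl, not_lt_of_gt hl]

lemma shuffleSign_insert_mul_insert {a j : Fin n} {K : Finset (Fin n)} (hne : a ≠ j)
    (ha : a ∉ K) (hj : j ∉ K) :
    shuffleSign {j} (insert a K) * shuffleSign {a} (insert j K)
      = -(shuffleSign {j} K * shuffleSign {a} K) := by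
  rw [insert_eq, insert_eq, shuffleSign_union_right _ (disjoint_singleton_left.2 ha),
    shuffleSign_union_right _ (disjoint_singleton_left.2 hj)]
  linear_combination (shuffleSign {j} K * shuffleSign {a} K) *
    shuffleSign_singleton_mul_singleton hne

lemma shuffleSign_assoc {A C I : Finset (Fin n)} (hAC : A ⊆ C) (hCI : C ⊆ I) :
    shuffleSign C (I \ C) * shuffleSign A (C \ A)
      = shuffleSign A (I \ A) * shuffleSign (C \ A) (I \ C) := by
  have hC : A ∪ (C \ A) = C := union_sdiff_of_subset hAC
  have hIA : (C \ A) ∪ (I \ C) = I \ A := by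
    rw [union_comm]; exact sdiff_union_sdiff_cancel hCI hAC
  have hd : Disjoint (C \ A) (I \ C) :=
    disjoint_of_subset_left sdiff_subset disjoint_sdiff
  have hsplit := shuffleSign_union_left (I \ C) (disjoint_sdiff : Disjoint A (C \ A))
  rw [hC] at hsplit
  rw [hsplit, ← hIA, shuffleSign_union_right _ hd]
  ring

lemma sum_powerset_shuffleSign_assoc (I : Finset (Fin n))
    (Φ : Finset (Fin n) → Finset (Fin n) → Finset (Fin n) → ℝ) :
    ∑ C ∈ I.powerset, ∑ A ∈ C.powerset,
        shuffleSign C (I \ C) * shuffleSign A (C \ A) * Φ A (C \ A) (I \ C)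
      = ∑ A ∈ I.powerset, ∑ A' ∈ (I \ A).powerset,
        shuffleSign A (I \ A) * shuffleSign A' ((I \ A) \ A') * Φ A A' ((I \ A) \ A') := by
  rw [← sum_powerset_powerset_sdiff]
  refine sum_congr rfl fun C hC => sum_congr rfl fun A hA => ?_
  have hAC := mem_powerset.1 hA
  rw [sdiff_sdiff_sdiff_cancel_right hAC, shuffleSign_assoc hAC (mem_powerset.1 hC)]

lemma wedge_assoc (ω₁ ω₂ ω₃ : DForm n) :
    wedge (wedge ω₁ ω₂) ω₃ = wedge ω₁ (wedge ω₂ ω₃) := by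
  funext I J
  let σ := @shuffleSign n
  calc wedge (wedge ω₁ ω₂) ω₃ I J
      = ∑ C ∈ I.powerset, ∑ A ∈ C.powerset, σ C (I \ C) * σ A (C \ A) *
          ∑ D ∈ J.powerset, ∑ B ∈ D.powerset, σ D (J \ D) * σ B (D \ B) *
            (ω₁ A B * ω₂ (C \ A) (D \ B) * ω₃ (I \ C) (J \ D)) := by
        simp only [σ, wedge, sum_mul, mul_sum]
        refine sum_congr rfl fun C _ => ?_
        rw [sum_comm]
        refine sum_congr rfl fun A _ => sum_congr rfl fun D _ => sum_congr rfl fun B _ => ?_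
        ring
    _ = ∑ A ∈ I.powerset, ∑ A' ∈ (I \ A).powerset, σ A (I \ A) * σ A' ((I \ A) \ A') *
          ∑ D ∈ J.powerset, ∑ B ∈ D.powerset, σ D (J \ D) * σ B (D \ B) *
            (ω₁ A B * ω₂ A' (D \ B) * ω₃ ((I \ A) \ A') (J \ D)) :=
        sum_powerset_shuffleSign_assoc I fun A A' R => ∑ D ∈ J.powerset, ∑ B ∈ D.powerset,
          σ D (J \ D) * σ B (D \ B) * (ω₁ A B * ω₂ A' (D \ B) * ω₃ R (J \ D))
    _ = ∑ A ∈ I.powerset, ∑ A' ∈ (I \ A).powerset, σ A (I \ A) * σ A' ((I \ A) \ A') *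
          ∑ B ∈ J.powerset, ∑ B' ∈ (J \ B).powerset, σ B (J \ B) * σ B' ((J \ B) \ B') *
            (ω₁ A B * ω₂ A' B' * ω₃ ((I \ A) \ A') ((J \ B) \ B')) := by
        refine sum_congr rfl fun A _ => sum_congr rfl fun A' _ => ?_
        rw [sum_powerset_shuffleSign_assoc J fun B B' R =>
          ω₁ A B * ω₂ A' B' * ω₃ ((I \ A) \ A') R]
    _ = wedge ω₁ (wedge ω₂ ω₃) I J := by
        simp only [σ, wedge, mul_sum]
        refine sum_congr rfl fun A _ => ?_
        rw [sum_comm]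
        refine sum_congr rfl fun A' _ => sum_congr rfl fun B _ => sum_congr rfl fun B' _ => ?_
        ring

lemma wedge_add_right (ω₁ ω₂ ω₃ : DForm n) :
    wedge ω₁ (ω₂ + ω₃) = wedge ω₁ ω₂ + wedge ω₁ ω₃ := by
  funext I J
  simp only [wedge, Pi.add_apply, ← sum_add_distrib]
  exact sum_congr rfl fun A _ => sum_congr rfl fun B _ => by ring

lemma wedge_smul_right (c : ℝ) (ω₁ ω₂ : DForm n) : wedge ω₁ (c • ω₂) = c • wedge ω₁ ω₂ := by
  funext I J
  simp only [wedge, Pi.smul_apply, smul_eq_mul, mul_sum]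
  exact sum_congr rfl fun A _ => sum_congr rfl fun B _ => by ring

lemma wedge_zero_right (ω : DForm n) : wedge ω 0 = 0 := by
  simpa using wedge_smul_right 0 ω 0

lemma dpow_zero_wedge (ω α : DForm n) : wedge (dpow ω 0) α = α := by
  funext I J
  rw [wedge, sum_eq_single_of_mem ∅ (empty_mem_powerset I), sum_eq_single_of_mem ∅
    (empty_mem_powerset J)]
  · simp [dpow, shuffleSign]
  · intro B _ hB
    simp [dpow, hB]
  · intro A _ hA
    exact sum_eq_zero fun B _ => by simp [dpow, hA]

lemma dpow_succ_wedge (ω α : DForm n) (m : ℕ) :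
    wedge (dpow ω (m + 1)) α = wedge ω (wedge (dpow ω m) α) :=
  wedge_assoc _ _ _

lemma contr_add (ω₁ ω₂ : DForm n) : contr (ω₁ + ω₂) = contr ω₁ + contr ω₂ := by
  funext I J
  simp only [contr, Pi.add_apply, ← sum_add_distrib]
  exact sum_congr rfl fun j _ => by split_ifs <;> ring

lemma contr_smul (c : ℝ) (ω : DForm n) : contr (c • ω) = c • contr ω := by
  funext I J
  simp only [contr, Pi.smul_apply, smul_eq_mul, mul_sum]
  exact sum_congr rfl fun j _ => by split_ifs <;> ring

lemma contr_zero : contr (0 : DForm n) = 0 :=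
  map_zero (AddMonoidHom.mk' contr contr_add)

lemma contr_sum {ι : Type*} (s : Finset ι) (f : ι → DForm n) :
    contr (∑ i ∈ s, f i) = ∑ i ∈ s, contr (f i) :=
  map_sum (AddMonoidHom.mk' contr contr_add) f s

lemma isOfDeg_wedge {ω₁ ω₂ : DForm n} {p q r s : ℕ} (h₁ : IsOfDeg ω₁ p q)
    (h₂ : IsOfDeg ω₂ r s) : IsOfDeg (wedge ω₁ ω₂) (p + r) (q + s) := by
  intro I J hne
  obtain ⟨A, hA, hA'⟩ := exists_ne_zero_of_sum_ne_zero hne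
  obtain ⟨B, hB, hAB⟩ := exists_ne_zero_of_sum_ne_zero hA'
  obtain ⟨e1, e2⟩ := h₁ A B (right_ne_zero_of_mul (left_ne_zero_of_mul hAB))
  obtain ⟨e3, e4⟩ := h₂ _ _ (right_ne_zero_of_mul hAB)
  have c1 := card_sdiff_add_card_eq_card (mem_powerset.1 hA)
  have c2 := card_sdiff_add_card_eq_card (mem_powerset.1 hB)
  omega

lemma isOfDeg_gMetric : IsOfDeg (gMetric n) 1 1 := by
  intro I J hne
  obtain ⟨rfl, hI⟩ := (ite_ne_right_iff.1 hne).1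
  exact ⟨hI, hI⟩

lemma isOfDeg_ofMatrix (h : Matrix (Fin n) (Fin n) ℝ) : IsOfDeg (ofMatrix h) 1 1 := by
  intro I J hne
  obtain ⟨i, _, hi⟩ := exists_ne_zero_of_sum_ne_zero hne
  obtain ⟨j, _, hij⟩ := exists_ne_zero_of_sum_ne_zero hi
  obtain ⟨rfl, rfl⟩ := (ite_ne_right_iff.1 hij).1
  simp

lemma isOfDeg_dpow {ω : DForm n} (h : IsOfDeg ω 1 1) (k : ℕ) : IsOfDeg (dpow ω k) k k := by
  induction k with
  | zero =>
    intro I J hne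
    obtain ⟨rfl, rfl⟩ := (ite_ne_right_iff.1 hne).1
    simp
  | succ k ih =>
    rw [dpow, add_comm k 1]
    exact isOfDeg_wedge h ih

lemma isOfDeg_contr {ω : DForm n} {p q : ℕ} (h : IsOfDeg ω p q) :
    IsOfDeg (contr ω) (p - 1) (q - 1) := by
  intro I J hne
  obtain ⟨j, _, hj⟩ := exists_ne_zero_of_sum_ne_zero hne
  obtain ⟨hjIJ, hω⟩ := ite_ne_left_iff.1 hj
  rw [not_or] at hjIJ
  obtain ⟨e1, e2⟩ := h _ _ (right_ne_zero_of_mul hω.symm)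
  rw [card_insert_of_notMem hjIJ.1] at e1
  rw [card_insert_of_notMem hjIJ.2] at e2
  omega

lemma isOfDeg_citer {ω : DForm n} {p q : ℕ} (h : IsOfDeg ω p q) (k : ℕ) :
    IsOfDeg (citer ω k) (p - k) (q - k) := by
  induction k with
  | zero => exact h
  | succ k ih =>
    rw [citer, ← Nat.sub_sub, ← Nat.sub_sub]
    exact isOfDeg_contr ih

lemma contr_eq_zero_of_isOfDeg_zero {ω : DForm n} {q : ℕ} (h : IsOfDeg ω 0 q) : contr ω = 0 := by
  funext I J
  refine sum_eq_zero fun j _ => ?_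
  split_ifs
  · rfl
  · by_contra hne
    simpa using (h _ _ (right_ne_zero_of_mul hne)).1

lemma citer_succ_eq_zero {ω : DForm n} {p q : ℕ} (h : IsOfDeg ω p q) : citer ω (p + 1) = 0 :=
  contr_eq_zero_of_isOfDeg_zero (by simpa using isOfDeg_citer h p)

lemma eq_zero_of_isOfDeg_of_lt {ω : DForm n} {p q : ℕ} (h : IsOfDeg ω p q) (hp : n < p) :
    ω = 0 := by
  funext I J
  by_contra hne
  have := card_le_univ I
  simp only [Fintype.card_fin] at this
  have := (h I J hne).1
  omega

lemma contr_apply_eq_sum_compl (ω : DForm n) (I J : Finset (Fin n)) :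
    contr ω I J = ∑ j ∈ (I ∪ J)ᶜ,
      shuffleSign {j} I * shuffleSign {j} J * ω (insert j I) (insert j J) := by
  rw [contr, sum_ite, sum_const_zero, zero_add]
  congr 1
  ext j
  simp

lemma wedge_gMetric_apply (ω : DForm n) (I J : Finset (Fin n)) :
    wedge (gMetric n) ω I J
      = ∑ a ∈ I ∩ J, shuffleSign {a} (I \ {a}) * shuffleSign {a} (J \ {a}) *
          ω (I \ {a}) (J \ {a}) := by
  have hrow : ∀ A ∈ I.powerset,
      ∑ B ∈ J.powerset, shuffleSign A (I \ A) * shuffleSign B (J \ B) * gMetric n A B *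
        ω (I \ A) (J \ B)
      = if A ⊆ J ∧ A.card = 1 then
          shuffleSign A (I \ A) * shuffleSign A (J \ A) * ω (I \ A) (J \ A) else 0 := by
    intro A _
    split_ifs with hA
    · rw [sum_eq_single_of_mem A (mem_powerset.2 hA.1)]
      · simp [gMetric, hA.2]
      · intro B _ hBA
        simp [gMetric, Ne.symm hBA]
    · refine sum_eq_zero fun B hB => ?_
      have : ¬(A = B ∧ A.card = 1) := fun h => hA ⟨h.1 ▸ mem_powerset.1 hB, h.2⟩
      simp [gMetric, this]
  have hsingletons : I.powerset.filter (fun A => A ⊆ J ∧ A.card = 1)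
      = (I ∩ J).image (fun a => {a}) := by
    ext A
    simp only [mem_filter, mem_powerset, mem_image, mem_inter, card_eq_one]
    constructor
    · rintro ⟨hAI, hAJ, a, rfl⟩
      exact ⟨a, ⟨hAI (mem_singleton_self a), hAJ (mem_singleton_self a)⟩, rfl⟩
    · rintro ⟨a, ⟨haI, haJ⟩, rfl⟩
      exact ⟨singleton_subset_iff.2 haI, singleton_subset_iff.2 haJ, a, rfl⟩
  rw [wedge, sum_congr rfl hrow, ← sum_filter, hsingletons,
    sum_image fun a _ b _ h => singleton_injective h]

/- Both `c (g ω)` and `g (c ω)` at `(I, J)` expand over pairs `a ∈ I ∩ J`, `j ∉ I ∪ J` with the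
same summands (moving `a` past `j` costs a sign on each side), plus the diagonal term `ω I J`,
counted `|(I ∪ J)ᶜ|` resp. `|I ∩ J|` times. -/
lemma contr_wedge_gMetric_apply_eq_sum (ω : DForm n) (I J : Finset (Fin n)) :
    contr (wedge (gMetric n) ω) I J
      = ((I ∪ J)ᶜ.card : ℝ) * ω I J + ∑ j ∈ (I ∪ J)ᶜ, ∑ a ∈ I ∩ J,
          shuffleSign {a} (I \ {a}) * shuffleSign {a} (J \ {a}) *
            (shuffleSign {j} (I \ {a}) * shuffleSign {j} (J \ {a}) *
              ω (insert j (I \ {a})) (insert j (J \ {a}))) := by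
  rw [contr_apply_eq_sum_compl, card_eq_sum_ones, Nat.cast_sum, sum_mul, ← sum_add_distrib]
  refine sum_congr rfl fun j hj => ?_
  obtain ⟨hjI, hjJ⟩ : j ∉ I ∧ j ∉ J := by simpa [not_or] using hj
  have hdel : ∀ {K : Finset (Fin n)}, j ∉ K → insert j K \ {j} = K := fun hK => by
    rw [insert_sdiff_of_mem _ (mem_singleton_self j), sdiff_singleton_eq_erase,
      erase_eq_of_notMem hK]
  rw [wedge_gMetric_apply, ← insert_inter_distrib, sum_insert (by simp [hjI]), hdel hjI,
    hdel hjJ, mul_add, mul_sum]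
  congr 1
  · linear_combination (ω I J * shuffleSign {j} J * shuffleSign {j} J) *
      shuffleSign_mul_self {j} I + ω I J * shuffleSign_mul_self {j} J
  refine sum_congr rfl fun a ha => ?_
  obtain ⟨haI, haJ⟩ := mem_inter.1 ha
  have hne : a ≠ j := by rintro rfl; exact hjI haI
  have hja : j ∉ ({a} : Finset (Fin n)) := by simpa using hne.symm
  have hsign : ∀ K : Finset (Fin n), a ∈ K → j ∉ K →
      shuffleSign {j} K * shuffleSign {a} (insert j (K \ {a}))
        = -(shuffleSign {j} (K \ {a}) * shuffleSign {a} (K \ {a})) := fun K haK hjK => by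
    have h := shuffleSign_insert_mul_insert (K := K \ {a}) hne (by simp)
      (by simp [hjK])
    rwa [sdiff_singleton_eq_erase, insert_erase haK, ← sdiff_singleton_eq_erase] at h
  rw [insert_sdiff_of_notMem _ hja, insert_sdiff_of_notMem _ hja]
  linear_combination (ω (insert j (I \ {a})) (insert j (J \ {a})) *
      (shuffleSign {j} J * shuffleSign {a} (insert j (J \ {a})))) * hsign I haI hjI
    - (ω (insert j (I \ {a})) (insert j (J \ {a})) *
      (shuffleSign {j} (I \ {a}) * shuffleSign {a} (I \ {a}))) * hsign J haJ hjJ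

lemma wedge_gMetric_contr_apply_eq_sum (ω : DForm n) (I J : Finset (Fin n)) :
    wedge (gMetric n) (contr ω) I J
      = ((I ∩ J).card : ℝ) * ω I J + ∑ a ∈ I ∩ J, ∑ j ∈ (I ∪ J)ᶜ,
          shuffleSign {a} (I \ {a}) * shuffleSign {a} (J \ {a}) *
            (shuffleSign {j} (I \ {a}) * shuffleSign {j} (J \ {a}) *
              ω (insert j (I \ {a})) (insert j (J \ {a}))) := by
  rw [wedge_gMetric_apply, card_eq_sum_ones, Nat.cast_sum, sum_mul, ← sum_add_distrib]
  refine sum_congr rfl fun a ha => ?_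
  obtain ⟨haI, haJ⟩ := mem_inter.1 ha
  have hadd : ∀ {K : Finset (Fin n)}, a ∈ K → insert a (K \ {a}) = K := fun haK => by
    rw [sdiff_singleton_eq_erase, insert_erase haK]
  have hcompl : (I \ {a} ∪ J \ {a})ᶜ = insert a (I ∪ J)ᶜ := by
    ext x
    by_cases hx : x = a <;> simp [hx, haI]
  rw [contr_apply_eq_sum_compl, hcompl, sum_insert (by simp [haI]), hadd haI, hadd haJ,
    mul_add, mul_sum]
  congr 1
  linear_combination (ω I J * shuffleSign {a} (J \ {a}) * shuffleSign {a} (J \ {a})) *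
    shuffleSign_mul_self {a} (I \ {a}) + ω I J * shuffleSign_mul_self {a} (J \ {a})

lemma contr_wedge_gMetric_apply (ω : DForm n) (I J : Finset (Fin n)) :
    contr (wedge (gMetric n) ω) I J
      = ((n : ℝ) - I.card - J.card) * ω I J + wedge (gMetric n) (contr ω) I J := by
  have hcard : ((I ∪ J)ᶜ.card : ℝ) = n - I.card - J.card + (I ∩ J).card := by
    have hle : (I ∪ J).card ≤ n := by simpa using card_le_univ (I ∪ J)
    have hunion : ((I ∪ J).card : ℝ) + (I ∩ J).card = I.card + J.card := by
      exact_mod_cast card_union_add_card_inter I J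
    rw [card_compl, Fintype.card_fin, Nat.cast_sub hle]
    linarith
  rw [contr_wedge_gMetric_apply_eq_sum, wedge_gMetric_contr_apply_eq_sum, sum_comm, hcard]
  ring

lemma contr_wedge_gMetric {ω : DForm n} {p q : ℕ} (hω : IsOfDeg ω p q) :
    contr (wedge (gMetric n) ω) = ((n : ℝ) - p - q) • ω + wedge (gMetric n) (contr ω) := by
  funext I J
  rw [contr_wedge_gMetric_apply]
  simp only [Pi.add_apply, Pi.smul_apply, smul_eq_mul]
  by_cases hz : ω I J = 0
  · simp [hz]
  · obtain ⟨hI, hJ⟩ := hω I J hz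
    rw [hI, hJ]

lemma contr_wedge_dpow_gMetric {α : DForm n} {p q : ℕ} (hα : IsOfDeg α p q) (m : ℕ) :
    contr (wedge (dpow (gMetric n) m) α)
      = ((m : ℝ) * ((n : ℝ) - p - q - m + 1)) • wedge (dpow (gMetric n) (m - 1)) α
        + wedge (dpow (gMetric n) m) (contr α) := by
  induction m with
  | zero => simp [dpow_zero_wedge]
  | succ m ih =>
    have hβ := isOfDeg_wedge (isOfDeg_dpow isOfDeg_gMetric m) hα
    rw [dpow_succ_wedge, contr_wedge_gMetric hβ, ih, wedge_add_right, wedge_smul_right,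
      ← dpow_succ_wedge, Nat.add_sub_cancel, add_left_comm, ← add_assoc]
    cases m with
    | zero => simp [dpow_succ_wedge, dpow_zero_wedge]
    | succ k =>
      rw [Nat.add_sub_cancel, ← dpow_succ_wedge, ← add_smul]
      congr 2
      push_cast
      ring

/-- The coefficient `(-1)^(k+q) / (k! q! (k+r-q)!)` of `sCofExt`, written so that it vanishes when
`k + r < q`: `r.descFactorial (q - k) / r!` is `1 / (k + r - q)!` if `q ≤ k + r` and `0` otherwise. -/
def cofactorCoeff (q r k : ℕ) : ℝ :=
  (-1) ^ (k + q) * r.descFactorial (q - k) / (k.factorial * q.factorial * r.factorial)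

def cofactorSum (ω : DForm n) (q r : ℕ) : DForm n :=
  ∑ k ∈ range (q + 1), cofactorCoeff q r k • wedge (dpow (gMetric n) (k + r - q)) (citer ω k)

lemma cofactorCoeff_eq_zero {q r k : ℕ} (h : k + r < q) : cofactorCoeff q r k = 0 := by
  simp [cofactorCoeff, Nat.descFactorial_eq_zero_iff_lt.2 (by omega : r < q - k)]

lemma mul_cofactorCoeff_succ {q r k : ℕ} (hk : k ≤ q) :
    ((k + r + 1 - q : ℕ) : ℝ) * cofactorCoeff q (r + 1) k = cofactorCoeff q r k := by
  have hdesc := Nat.succ_descFactorial r (q - k)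
  rw [show r + 1 - (q - k) = k + r + 1 - q by omega] at hdesc
  have hdesc' : ((k + r + 1 - q : ℕ) : ℝ) * (r + 1).descFactorial (q - k)
      = (r + 1) * r.descFactorial (q - k) := by exact_mod_cast hdesc
  simp only [cofactorCoeff, Nat.factorial_succ]
  push_cast
  rw [mul_div_assoc', mul_left_comm, hdesc']
  field_simp

lemma cofactorCoeff_succ {q r k : ℕ} (hk : k < q) :
    cofactorCoeff q (r + 1) k = -((k + 1 : ℝ) * cofactorCoeff q r (k + 1)) := by
  obtain ⟨d, hd⟩ : ∃ d, q - k = d + 1 := ⟨q - k - 1, by omega⟩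
  have hd' : q - (k + 1) = d := by omega
  simp only [cofactorCoeff, hd, hd', Nat.succ_descFactorial_succ, Nat.factorial_succ, pow_succ,
    show k + 1 + q = k + q + 1 by omega]
  push_cast
  field_simp

lemma sCofExt_eq_cofactorSum (h : Matrix (Fin n) (Fin n) ℝ) (r q : ℕ) :
    sCofExt h r q = cofactorSum (dpow (ofMatrix h) q) q r := by
  have hsub : Icc (q - r) q ⊆ range (q + 1) := fun k hk => by
    simp only [mem_Icc, mem_range] at hk ⊢; omega
  rw [sCofExt, cofactorSum, ← sum_subset hsub fun k hk₁ hk => by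
    rw [cofactorCoeff_eq_zero (by simp only [mem_Icc, mem_range] at hk hk₁; omega), zero_smul]]
  refine sum_congr rfl fun k hk => ?_
  obtain ⟨hk1, hk2⟩ := mem_Icc.1 hk
  have hle : q - k ≤ r := by omega
  have hfac := Nat.factorial_mul_descFactorial hle
  rw [show r - (q - k) = k + r - q by omega] at hfac
  have hdesc : (r.descFactorial (q - k) : ℝ) ≠ 0 := by
    exact_mod_cast (Nat.descFactorial_pos.2 hle).ne'
  rw [cofactorCoeff, ← hfac]
  push_cast
  field_simp

lemma contr_cofactorSum_term {ω : DForm n} {q k : ℕ} (hω : IsOfDeg ω q q) (hkq : k ≤ q) (r : ℕ) :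
    contr (cofactorCoeff q (r + 1) k • wedge (dpow (gMetric n) (k + (r + 1) - q)) (citer ω k))
      = (cofactorCoeff q r k * ((n : ℝ) - q + k - r)) •
          wedge (dpow (gMetric n) (k + r - q)) (citer ω k)
        + cofactorCoeff q (r + 1) k • wedge (dpow (gMetric n) (k + 1 + r - q)) (citer ω (k + 1)) := by
  rw [contr_smul, contr_wedge_dpow_gMetric (isOfDeg_citer hω k), smul_add, smul_smul,
    show k + (r + 1) - q - 1 = k + r - q by omega, show k + (r + 1) - q = k + 1 + r - q by omega]
  congr 2
  rcases lt_or_ge (k + r) q with hlt | hge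
  · rw [cofactorCoeff_eq_zero hlt, show k + 1 + r - q = 0 by omega]
    simp
  · rw [← mul_cofactorCoeff_succ (r := r) hkq, show k + r + 1 - q = k + 1 + r - q by omega,
      Nat.cast_sub hkq, Nat.cast_sub (by omega : q ≤ k + 1 + r)]
    push_cast
    ring

lemma contr_cofactorSum {ω : DForm n} {q : ℕ} (hω : IsOfDeg ω q q) (r : ℕ) :
    contr (cofactorSum ω q (r + 1)) = ((n : ℝ) - q - r) • cofactorSum ω q r := by
  set F : ℕ → DForm n := fun k => wedge (dpow (gMetric n) (k + r - q)) (citer ω k) with hF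
  have hshift : ∑ k ∈ range (q + 1), cofactorCoeff q (r + 1) k • F (k + 1)
      = ∑ k ∈ range (q + 1), (-(k : ℝ) * cofactorCoeff q r k) • F k := by
    have hlast : F (q + 1) = 0 := by
      simp only [hF, citer_succ_eq_zero hω, wedge_zero_right]
    rw [sum_range_succ, hlast, smul_zero, add_zero, sum_range_succ', Nat.cast_zero, neg_zero,
      zero_mul, zero_smul, add_zero]
    refine sum_congr rfl fun k hk => ?_
    rw [cofactorCoeff_succ (mem_range.1 hk), Nat.cast_succ, neg_mul]
  rw [cofactorSum, contr_sum, sum_congr rfl fun k hk => contr_cofactorSum_term hω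
      (Nat.lt_succ_iff.1 (mem_range.1 hk)) r, sum_add_distrib, hshift, ← sum_add_distrib,
    cofactorSum, smul_sum]
  refine sum_congr rfl fun k _ => ?_
  rw [← add_smul, smul_smul]
  congr 1
  ring

lemma cofactorSum_eq_zero_of_lt {ω : DForm n} {q r : ℕ} (hω : IsOfDeg ω q q) (hr : n < r) :
    cofactorSum ω q r = 0 := by
  refine sum_eq_zero fun k hk => ?_
  have hkq : k ≤ q := Nat.lt_succ_iff.1 (mem_range.1 hk)
  rcases lt_or_ge (k + r) q with hlt | hge
  · rw [cofactorCoeff_eq_zero hlt, zero_smul]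
  · have hdeg := isOfDeg_wedge (isOfDeg_dpow isOfDeg_gMetric (k + r - q)) (isOfDeg_citer hω k)
    rw [eq_zero_of_isOfDeg_of_lt hdeg (by omega), smul_zero]

lemma cofactorSum_eq_zero {ω : DForm n} {q r : ℕ} (hω : IsOfDeg ω q q) (hrq : n < r + q) :
    cofactorSum ω q r = 0 := by
  obtain ⟨d, hd⟩ : ∃ d, n < r + d := ⟨n + 1, by omega⟩
  induction d generalizing r with
  | zero => exact cofactorSum_eq_zero_of_lt hω hd
  | succ d ih =>
    rcases lt_or_ge n (r + d) with h | h
    · exact ih hrq h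
    · have hcontr := contr_cofactorSum hω r
      rw [ih (by omega) (by omega), contr_zero] at hcontr
      refine (smul_eq_zero.1 hcontr.symm).resolve_left fun hzero => ?_
      have : (n : ℝ) < r + q := by exact_mod_cast hrq
      linarith

end DForm

open DForm in
theorem statement11_general (n : ℕ) (h : Matrix (Fin n) (Fin n) ℝ)
    (i r : ℕ) (hr1 : i + 1 ≤ r) :
    sCofExt h r (n - i) = 0 := by
  rw [sCofExt_eq_cofactorSum]
  exact cofactorSum_eq_zero (isOfDeg_dpow (isOfDeg_ofMatrix h) _) (by omega)

open DForm in
/-- General Cayley–Hamilton theorem: `s_{(r,n-i)}(h) = 0` for `i+1 ≤ r ≤ n-i`. -/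
theorem statement11 (n : ℕ) (h : Matrix (Fin n) (Fin n) ℝ)
    (hsym : ∀ i j, h i j = h j i)
    (i r : ℕ) (hr1 : i + 1 ≤ r) (hr2 : r + i ≤ n) :
    sCofExt h r (n - i) = 0 :=
  statement11_general n h i r hr1
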